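/- Let A be a commutative ring containing an element ε ≠ 0 with ε² = 0. Then there exist bounded cochain complexes K, L, M of finitely generated free A-modules, morphisms of complexes j : K → L and q : L → M such that 0 → K^n → L^n → M^n → 0 is exact for every n, and morphisms of complexes u : K → K, v : L → L, w : M → M such that v ∘ j is chain homotopic to j ∘ u and q ∘ v = w ∘ q, but Tr(v) ≠ Tr(u) + Tr(w). Explicitly one may take K = A placed in degree 1, L the complex A → A in degrees 0 and 1 with differential multiplication by ε, M = A placed in degree 0, j the identity in degree 1, q the identity in degree 0, u = 0, w = 0, and v given by 0 in degree 0 and multiplication by ε in degree 1; then Tr(u) = Tr(w) = 0 while Tr(v) = −ε ≠ 0. -/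

import Mathlib

/-!
STATEMENT 6: Let `A` be a commutative ring containing an element `ε ≠ 0` with
`ε² = 0`.  Then there exist bounded cochain complexes `K, L, M` of finitely
generated free `A`-modules, morphisms of complexes `j : K → L` and `q : L → M`
with `0 → Kⁿ → Lⁿ → Mⁿ → 0` exact for every `n`, and morphisms of complexes
`u : K → K`, `v : L → L`, `w : M → M` such that `v ∘ j` is chain homotopic to
`j ∘ u` and `q ∘ v = w ∘ q`, but `Tr(v) ≠ Tr(u) + Tr(w)`.

Complexes are modelled as families `ℤ → ModuleCat A` with differentials
squaring to zero; boundedness means triviality outside a finite set of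
degrees; the trace of a degreewise endomorphism is `∑ᶠ i, (-1)^i * Tr(uⁱ)`.
The chain homotopy `h` is indexed so that `h i : K^{i+1} →ₗ[A] Lⁱ`; the
homotopy identity `(v∘j)ⁿ - (j∘u)ⁿ = d^{n-1}_L ∘ hⁿ + h^{n+1} ∘ dⁿ_K` (for all
`n : ℤ`) is expressed, writing `n = i + 1`, by the equation below.
-/

/-- The trace of an endomorphism (given degreewise) of a (bounded) cochain
complex of `A`-modules: `Tr(u) = ∑ᶠ i, (-1)^i * Tr(uⁱ)`. -/
noncomputable def complexTrace {A : Type} [CommRing A] (K : ℤ → ModuleCat A)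
    (u : ∀ i, K i →ₗ[A] K i) : A :=
  ∑ᶠ i : ℤ, (-1 : A) ^ i.natAbs * LinearMap.trace A (K i) (u i)

/-!
In `L = (A --ε--> A)` (degrees 0, 1) the map `v = (0, ε)` commutes with the differential
because `ε² = 0`, and `v ∘ j = ε = d ∘ h` for `h : K¹ → L⁰` the identity, so `v ∘ j` is
homotopic to `j ∘ u = 0`. As `u` and `w` vanish, additivity would force `Tr(v) = 0`, whereas
`Tr(v) = (-1)¹ ε`.
-/

universe u v w

section Exactness

variable {R M₁ M₂ M₃ : Type*} [Ring R] [AddCommGroup M₁] [AddCommGroup M₂] [AddCommGroup M₃]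
  [Module R M₁] [Module R M₂] [Module R M₃]

lemma shortExact_of_subsingleton_left [Subsingleton M₁] (f : M₁ →ₗ[R] M₂) {g : M₂ →ₗ[R] M₃}
    (hg : Function.Bijective g) :
    Function.Injective f ∧ Function.Exact f g ∧ Function.Surjective g := by
  obtain rfl : f = 0 := Subsingleton.elim _ _
  exact ⟨Function.injective_of_subsingleton _, (LinearMap.exact_zero_iff_injective _ g).2 hg.1,
    hg.2⟩

lemma shortExact_of_subsingleton_right [Subsingleton M₃] {f : M₁ →ₗ[R] M₂} (g : M₂ →ₗ[R] M₃)
    (hf : Function.Bijective f) :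
    Function.Injective f ∧ Function.Exact f g ∧ Function.Surjective g := by
  obtain rfl : g = 0 := Subsingleton.elim _ _
  exact ⟨hf.1, (LinearMap.exact_zero_iff_surjective _ f).2 hf.2,
    Function.surjective_to_subsingleton _⟩

end Exactness

section ComplexTrace

variable {A : Type} [CommRing A] {X : ℤ → ModuleCat A}

@[simp]
lemma complexTrace_zero : complexTrace X (fun _ => 0) = 0 := by
  simp [complexTrace]

lemma complexTrace_eq_single {u : ∀ i, X i →ₗ[A] X i} (n : ℤ) (hu : ∀ i ≠ n, u i = 0) :
    complexTrace X u = (-1) ^ n.natAbs * LinearMap.trace A (X n) (u n) :=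
  finsum_eq_single _ n fun i hi => by rw [hu i hi, map_zero, mul_zero]

end ComplexTrace

section FreeGraded

variable (A : Type) [CommRing A]

def freeGraded (r : ℤ → ℕ) (i : ℤ) : ModuleCat.{u} A :=
  ModuleCat.of A (ULift.{u} (Fin (r i) → A))

variable {A} {r r' : ℤ → ℕ}

instance (i : ℤ) : Module.Finite A (freeGraded.{u} A r i) :=
  inferInstanceAs (Module.Finite A (ULift (Fin (r i) → A)))

instance (i : ℤ) : Module.Free A (freeGraded.{u} A r i) :=
  inferInstanceAs (Module.Free A (ULift (Fin (r i) → A)))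

lemma subsingleton_freeGraded {i : ℤ} (h : r i = 0) : Subsingleton (freeGraded.{u} A r i) := by
  unfold freeGraded; rw [h]; infer_instance

lemma finrank_freeGraded [Nontrivial A] (i : ℤ) :
    Module.finrank A (freeGraded.{u} A r i) = r i :=
  (finrank_ulift (R := A) (M := Fin (r i) → A)).trans (Module.finrank_fin_fun A)

lemma freeGraded_linearMap_ext {i k : ℤ} (h : r i = 0 ∨ r' k = 0)
    (f g : freeGraded.{u} A r i →ₗ[A] freeGraded.{v} A r' k) : f = g := by
  rcases h with h | h
  · have := subsingleton_freeGraded.{u} (A := A) h; exact Subsingleton.elim f g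
  · have := subsingleton_freeGraded.{v} (A := A) h; exact Subsingleton.elim f g

end FreeGraded

def ULift.linearEquivULift (R M : Type*) [Semiring R] [AddCommMonoid M] [Module R M] :
    ULift.{u} M ≃ₗ[R] ULift.{v} M :=
  ULift.moduleEquiv.trans ULift.moduleEquiv.symm

namespace TraceCounterexample

def rankK (i : ℤ) : ℕ := if i = 1 then 1 else 0
def rankL (i : ℤ) : ℕ := if i = 0 ∨ i = 1 then 1 else 0
def rankM (i : ℤ) : ℕ := if i = 0 then 1 else 0

variable (A : Type) [CommRing A] (ε : A)

abbrev K : ℤ → ModuleCat.{u} A := freeGraded A rankK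
abbrev L : ℤ → ModuleCat.{v} A := freeGraded A rankL
abbrev M : ℤ → ModuleCat.{w} A := freeGraded A rankM

def dL : ∀ i, L.{v} A i →ₗ[A] L.{v} A (i + 1)
  | 0 => ε • LinearMap.id
  | _ => 0

def v : ∀ i, L.{v} A i →ₗ[A] L.{v} A i
  | 1 => ε • LinearMap.id
  | _ => 0

def j : ∀ i, K.{u} A i →ₗ[A] L.{v} A i
  | 1 => (ULift.linearEquivULift A _).toLinearMap
  | _ => 0

def q : ∀ i, L.{v} A i →ₗ[A] M.{w} A i
  | 0 => (ULift.linearEquivULift A _).toLinearMap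
  | _ => 0

def h : ∀ i, K.{u} A (i + 1) →ₗ[A] L.{v} A i
  | 0 => (ULift.linearEquivULift A _).toLinearMap
  | _ => 0

variable {A ε}

lemma dL_comp_dL (i : ℤ) : (dL.{v} A ε (i + 1)).comp (dL A ε i) = 0 :=
  freeGraded_linearMap_ext (by simp [rankL]; omega) _ _

lemma dL_comp_j (i : ℤ) : (dL.{v} A ε i).comp (j.{u} A i) = 0 :=
  freeGraded_linearMap_ext (by simp [rankK, rankL]; omega) _ _

lemma q_comp_dL (i : ℤ) : (q.{v, w} A (i + 1)).comp (dL A ε i) = 0 :=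
  freeGraded_linearMap_ext (by simp [rankL, rankM]; omega) _ _

lemma dL_comp_v (hε : ε ^ 2 = 0) (i : ℤ) :
    (dL.{v} A ε i).comp (v A ε i) = (v A ε (i + 1)).comp (dL A ε i) := by
  rcases eq_or_ne i 0 with rfl | hi
  · refine LinearMap.ext fun x => ULift.ext _ _ (funext fun k => ?_)
    show ε * 0 = ε * (ε * x.down k)
    rw [mul_zero, ← mul_assoc, ← sq, hε, zero_mul]
  · exact freeGraded_linearMap_ext (by simp [rankL]; omega) _ _

lemma v_comp_j (i : ℤ) :
    (v.{v} A ε (i + 1)).comp (j.{u} A (i + 1)) = (dL A ε i).comp (h A i) := by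
  rcases eq_or_ne i 0 with rfl | hi
  · rfl
  · exact freeGraded_linearMap_ext (by simp [rankK]; omega) _ _

lemma v_eq_zero {i : ℤ} (hi : i ≠ 1) : v.{v} A ε i = 0 := by
  rcases eq_or_ne i 0 with rfl | hi₀
  · rfl
  · exact freeGraded_linearMap_ext (by simp [rankL]; omega) _ _

lemma q_comp_v (i : ℤ) : (q.{v, w} A i).comp (v A ε i) = 0 := by
  rcases eq_or_ne i 1 with rfl | hi
  · exact freeGraded_linearMap_ext (by simp [rankM]) _ _
  · rw [v_eq_zero hi, LinearMap.comp_zero]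

lemma shortExact_j_q (i : ℤ) :
    Function.Injective (j.{u, v} A i) ∧ Function.Exact (j.{u, v} A i) (q.{v, w} A i) ∧
      Function.Surjective (q.{v, w} A i) := by
  rcases eq_or_ne i 1 with rfl | hi₁
  · have := subsingleton_freeGraded.{w} (A := A) (r := rankM) (i := 1) (by simp [rankM])
    exact shortExact_of_subsingleton_right (f := j A 1) _
      (ULift.linearEquivULift A (Fin 1 → A)).bijective
  have := subsingleton_freeGraded.{u} (A := A) (r := rankK) (i := i) (by simp [rankK, hi₁])
  rcases eq_or_ne i 0 with rfl | hi₀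
  · exact shortExact_of_subsingleton_left (g := q A 0) _
      (ULift.linearEquivULift A (Fin 1 → A)).bijective
  · have := subsingleton_freeGraded.{v} (A := A) (r := rankL) (i := i) (by simp [rankL]; omega)
    have := subsingleton_freeGraded.{w} (A := A) (r := rankM) (i := i) (by simp [rankM, hi₀])
    exact shortExact_of_subsingleton_left (g := q A i) _
      ⟨Function.injective_of_subsingleton _, Function.surjective_to_subsingleton _⟩

lemma bounded : ∃ S : Finset ℤ, ∀ i ∉ S,
    Subsingleton (K.{u} A i) ∧ Subsingleton (L.{v} A i) ∧ Subsingleton (M.{w} A i) := by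
  refine ⟨{0, 1}, fun i hi => ?_⟩
  simp only [Finset.mem_insert, Finset.mem_singleton, not_or] at hi
  exact ⟨subsingleton_freeGraded (by simp [rankK, hi.2]),
    subsingleton_freeGraded (by simp [rankL, hi.1, hi.2]),
    subsingleton_freeGraded (by simp [rankM, hi.1])⟩

lemma complexTrace_v [Nontrivial A] : complexTrace (L.{v} A) (v A ε) = -ε := by
  rw [complexTrace_eq_single 1 fun i => v_eq_zero]
  show (-1) ^ 1 * LinearMap.trace A (L A 1) (ε • LinearMap.id) = -ε
  rw [map_smul, LinearMap.trace_id, finrank_freeGraded]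
  simp [rankL]

end TraceCounterexample

theorem exists_counterexample_to_homotopy_trace_additivity
    (A : Type) [CommRing A] (ε : A) (hne : ε ≠ 0) (hsq : ε ^ 2 = 0) :
    ∃ (K L M : ℤ → ModuleCat A)
      (dK : ∀ i, K i →ₗ[A] K (i + 1))
      (dL : ∀ i, L i →ₗ[A] L (i + 1))
      (dM : ∀ i, M i →ₗ[A] M (i + 1))
      (j : ∀ i, K i →ₗ[A] L i) (q : ∀ i, L i →ₗ[A] M i)
      (u : ∀ i, K i →ₗ[A] K i) (v : ∀ i, L i →ₗ[A] L i)
      (w : ∀ i, M i →ₗ[A] M i),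
      -- K, L, M are cochain complexes ...
      (∀ i, (dK (i + 1)).comp (dK i) = 0) ∧
      (∀ i, (dL (i + 1)).comp (dL i) = 0) ∧
      (∀ i, (dM (i + 1)).comp (dM i) = 0) ∧
      -- ... which are bounded ...
      (∃ S : Finset ℤ, ∀ i ∉ S,
        Subsingleton (K i) ∧ Subsingleton (L i) ∧ Subsingleton (M i)) ∧
      -- ... and consist of finitely generated free A-modules;
      (∀ i, Module.Finite A (K i) ∧ Module.Free A (K i)) ∧
      (∀ i, Module.Finite A (L i) ∧ Module.Free A (L i)) ∧
      (∀ i, Module.Finite A (M i) ∧ Module.Free A (M i)) ∧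
      -- j and q are morphisms of complexes ...
      (∀ i, (dL i).comp (j i) = (j (i + 1)).comp (dK i)) ∧
      (∀ i, (dM i).comp (q i) = (q (i + 1)).comp (dL i)) ∧
      -- ... with 0 → Kⁿ → Lⁿ → Mⁿ → 0 exact for every n;
      (∀ i, Function.Injective (j i) ∧ Function.Exact (j i) (q i) ∧
        Function.Surjective (q i)) ∧
      -- u, v, w are morphisms of complexes ...
      (∀ i, (dK i).comp (u i) = (u (i + 1)).comp (dK i)) ∧
      (∀ i, (dL i).comp (v i) = (v (i + 1)).comp (dL i)) ∧
      (∀ i, (dM i).comp (w i) = (w (i + 1)).comp (dM i)) ∧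
      -- ... such that v ∘ j is chain homotopic to j ∘ u ...
      (∃ h : ∀ i, K (i + 1) →ₗ[A] L i, ∀ i,
        (v (i + 1)).comp (j (i + 1)) - (j (i + 1)).comp (u (i + 1)) =
          (dL i).comp (h i) + (h (i + 1)).comp (dK (i + 1))) ∧
      -- ... and q ∘ v = w ∘ q, ...
      (∀ i, (q i).comp (v i) = (w i).comp (q i)) ∧
      -- ... but the trace is not additive:
      complexTrace L v ≠ complexTrace K u + complexTrace M w := by
  have : Nontrivial A := ⟨⟨ε, 0, hne⟩⟩
  open TraceCounterexample in
  exact ⟨K A, L A, M A, fun _ => 0, dL A ε, fun _ => 0, j A, q A,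
    fun _ => 0, v A ε, fun _ => 0,
    fun _ => LinearMap.zero_comp _, dL_comp_dL, fun _ => LinearMap.zero_comp _, bounded,
    fun _ => ⟨inferInstance, inferInstance⟩, fun _ => ⟨inferInstance, inferInstance⟩,
    fun _ => ⟨inferInstance, inferInstance⟩,
    fun i => (dL_comp_j i).trans (LinearMap.comp_zero _).symm,
    fun i => (LinearMap.zero_comp _).trans (q_comp_dL i).symm, shortExact_j_q,
    fun _ => rfl, dL_comp_v hsq, fun _ => rfl, ⟨h A, fun i => by simp [v_comp_j]⟩,
    fun i => (q_comp_v i).trans (LinearMap.zero_comp _).symm,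
    by simpa [complexTrace_v] using hne⟩
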